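/- Let ⟨A | R⟩ satisfy C(4), let w ∈ A* have clean overlap prefix aXY (a ∈ A*, XYZ a relation word with maximal piece prefix X and middle word Y), and suppose a piece p is a possible prefix of w but not a prefix of w. Then p is a prefix of a·X̄ for some complement X̄Ȳ Z̄ of XYZ with X̄ ≠ X or Ȳ ≠ Y; in particular |p| ≤ |a| + |X̄|. -/

import Mathlib

variable {A : Type*}

/-- One step of rewriting with respect to a relation set `R`. -/
def OneStep (R : Set (List A × List A)) (u v : List A) : Prop :=
  ∃ x y p q, ((p, q) ∈ R ∨ (q, p) ∈ R) ∧ u = x ++ p ++ y ∧ v = x ++ q ++ y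

/-- A (two-sided) congruence on the free monoid `A*`. -/
def IsCong (s : List A → List A → Prop) : Prop :=
  Equivalence s ∧ ∀ u v x y : List A, s u v → s (x ++ u ++ y) (x ++ v ++ y)

/-- The least congruence on `A*` containing `R`; `Cong R u v` means `(u, v) ∈ R#`. -/
def Cong (R : Set (List A × List A)) (u v : List A) : Prop :=
  ∀ s, IsCong s → (∀ p ∈ R, s p.1 p.2) → s u v

/-- The relation words of the presentation `⟨A | R⟩`. -/
def RelWords (R : Set (List A × List A)) : Set (List A) :=
  {w | ∃ v, (w, v) ∈ R ∨ (v, w) ∈ R}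

/-- `p` is a piece of the presentation `⟨A | R⟩`. -/
def IsPiece (R : Set (List A × List A)) (p : List A) : Prop :=
  p = [] ∨
    (∃ u v, u ∈ RelWords R ∧ v ∈ RelWords R ∧ u ≠ v ∧ p <:+: u ∧ p <:+: v) ∨
    (∃ u x x' y y', u ∈ RelWords R ∧ u = x ++ p ++ y ∧ u = x' ++ p ++ y' ∧ x ≠ x')

/-- The presentation satisfies `C(n)`: no relation word is a product of fewer than `n` pieces. -/
def SatisfiesC (R : Set (List A × List A)) (n : ℕ) : Prop :=
  ∀ u ∈ RelWords R, ∀ l : List (List A), (∀ p ∈ l, IsPiece R p) → u = l.flatten →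
    n ≤ l.length

/-- `X` is the maximal piece prefix of `u`. -/
def MaxPiecePrefix (R : Set (List A × List A)) (u X : List A) : Prop :=
  X <+: u ∧ IsPiece R X ∧ ∀ p, p <+: u → IsPiece R p → p.length ≤ X.length

/-- `Z` is the maximal piece suffix of `u`. -/
def MaxPieceSuffix (R : Set (List A × List A)) (u Z : List A) : Prop :=
  Z <:+ u ∧ IsPiece R Z ∧ ∀ p, p <:+ u → IsPiece R p → p.length ≤ Z.length

/-- `u = X ++ Y ++ Z` is the decomposition of the relation word `u` into its maximal
piece prefix `X`, middle word `Y`, and maximal piece suffix `Z`. -/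
def RelDecomp (R : Set (List A × List A)) (u X Y Z : List A) : Prop :=
  u ∈ RelWords R ∧ MaxPiecePrefix R u X ∧ MaxPieceSuffix R u Z ∧ u = X ++ Y ++ Z

/-- `Y` is the middle word of the relation word `u`. -/
def MiddleWord (R : Set (List A × List A)) (u Y : List A) : Prop :=
  ∃ X Z, RelDecomp R u X Y Z

/-- `v` is a complement of the relation word `u`. -/
def ComplRel (R : Set (List A × List A)) (u v : List A) : Prop :=
  Relation.ReflTransGen (fun a b => (a, b) ∈ R ∨ (b, a) ∈ R) u v

/-- `a ++ X ++ Y` is a relation prefix of `w`. -/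
def IsRelPrefix (R : Set (List A × List A)) (w a X Y : List A) : Prop :=
  (∃ u Z, RelDecomp R u X Y Z) ∧ (a ++ X ++ Y) <+: w

/-- `X` and `Y` are the maximal piece prefix and middle word of some relation word. -/
def RelXY (R : Set (List A × List A)) (X Y : List A) : Prop :=
  ∃ u Z, RelDecomp R u X Y Z

/-- `OChain R r X Y` holds when `r ++ X ++ Y` has the form
`X₁Y₁'X₂Y₂' ⋯ X_{n-1}Y_{n-1}' X Y` where each `Yᵢ'` is a proper nonempty prefix of the
middle word `Yᵢ`. -/
inductive OChain (R : Set (List A × List A)) : List A → List A → List A → Prop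
  | base (X Y : List A) : RelXY R X Y → OChain R [] X Y
  | step (X Y Y' r Xl Yl : List A) : RelXY R X Y → Y' <+: Y → Y' ≠ Y → Y' ≠ [] →
      OChain R r Xl Yl → OChain R (X ++ Y' ++ r) Xl Yl

/-- `b ++ r ++ X ++ Y` is an overlap prefix of `w` (with final block `X Y`): it is a chain
as above and no factor of the form `X₀Y₀` begins before the end of `b`. -/
def IsOverlapPrefix (R : Set (List A × List A)) (w b r X Y : List A) : Prop :=
  OChain R r X Y ∧ (b ++ r ++ X ++ Y) <+: w ∧
    ¬ ∃ c X₀ Y₀ : List A, RelXY R X₀ Y₀ ∧ c.length < b.length ∧ (c ++ X₀ ++ Y₀) <+: w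

/-- `a ++ X ++ Y` is a clean overlap prefix of `w`: an overlap prefix such that `w` has no
prefix of the form `a X Y' X₀ Y₀` with `Y'` a proper prefix of `Y`. -/
def IsCleanOverlapPrefix (R : Set (List A × List A)) (w a X Y : List A) : Prop :=
  (∃ b r, a = b ++ r ∧ IsOverlapPrefix R w b r X Y) ∧
    ∀ Y' X₀ Y₀ : List A, Y' <+: Y → Y' ≠ Y → RelXY R X₀ Y₀ →
      ¬ (a ++ X ++ Y' ++ X₀ ++ Y₀) <+: w

/-!
Follow a rewriting sequence from `w` to `w'`, keeping track of a prefix `a B₁ ⋯ Bₖ X̄ Ȳ` of the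
current word, where each `Bᵢ = XᵢYᵢ'` is a relation word cut inside its middle word, `X̄ȲZ̄` is a
relation word, and the first relation word in the list `B₁, …, Bₖ, X̄ȲZ̄` is a complement of
`XYZ`. The overlap condition writes `a` as `b` followed by blocks, with no factor `X₀Y₀`
starting inside `b`. By C(4) a relation word being rewritten either lies beyond the tracked
prefix, or is `X̄ȲZ̄` itself and is replaced by a complement, or starts inside `Ȳ`, and then
`X̄ȲZ̄` becomes one more block. A rewrite can also create a factor `X₀Y₀` starting inside `b`,
but only one that straddles the end of `b`, which then gives up a block.

In `w'`, a piece that is a prefix cannot reach past `a X̄` into the middle word of the tracked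
complement. If `X̄ = X`, the piece would be a prefix of `a X` and hence of `w`.
-/

lemma exists_split_of_overlap {v x₁ f₁ x₂ f₂ : List A} (h₁ : x₁ ++ f₁ <+: v)
    (h₂ : x₂ ++ f₂ <+: v) (hle : x₁.length ≤ x₂.length)
    (hov : x₂.length ≤ x₁.length + f₁.length)
    (hend : x₁.length + f₁.length ≤ x₂.length + f₂.length) :
    ∃ p q, f₁ = p ++ q ∧ p.length = x₂.length - x₁.length ∧ q <+: f₂ := by
  obtain ⟨p, rfl⟩ : x₁ <+: x₂ :=
    List.prefix_of_prefix_length_le ((List.prefix_append _ _).trans h₁)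
      ((List.prefix_append _ _).trans h₂) hle
  obtain ⟨q, rfl⟩ : p <+: f₁ := by
    rw [← List.prefix_append_right_inj x₁]
    exact List.prefix_of_prefix_length_le ((List.prefix_append _ _).trans h₂) h₁
      (by simpa using hov)
  have hq : x₁ ++ p ++ q <+: x₁ ++ p ++ f₂ :=
    List.prefix_of_prefix_length_le (by simpa using h₁) h₂ (by simp at hend ⊢; omega)
  exact ⟨p, q, rfl, by simp, (List.prefix_append_right_inj _).1 hq⟩

lemma exists_split_of_contains {v x₁ f₁ x₂ f₂ : List A} (h₁ : x₁ ++ f₁ <+: v)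
    (h₂ : x₂ ++ f₂ <+: v) (hle : x₁.length ≤ x₂.length)
    (hend : x₂.length + f₂.length ≤ x₁.length + f₁.length) :
    ∃ p r, f₁ = p ++ f₂ ++ r ∧ p.length = x₂.length - x₁.length := by
  obtain ⟨p, rfl⟩ : x₁ <+: x₂ :=
    List.prefix_of_prefix_length_le ((List.prefix_append _ _).trans h₁)
      ((List.prefix_append _ _).trans h₂) hle
  have h : x₁ ++ (p ++ f₂) <+: x₁ ++ f₁ :=
    List.prefix_of_prefix_length_le (by simpa using h₂) h₁ (by simp at hend ⊢; omega)
  obtain ⟨r, hr⟩ := (List.prefix_append_right_inj _).1 h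
  exact ⟨p, r, by simp [← hr], by simp⟩

section Pieces

variable {R : Set (List A × List A)}

lemma IsPiece.infix {p q : List A} (hp : IsPiece R p) (hq : q <:+: p) : IsPiece R q := by
  rcases hp with rfl | ⟨u, v, hu, hv, huv, hpu, hpv⟩ | ⟨u, x, x', y, y', hu, h₁, h₂, hxx⟩
  · exact Or.inl (List.eq_nil_of_infix_nil hq)
  · exact Or.inr (Or.inl ⟨u, v, hu, hv, huv, hq.trans hpu, hq.trans hpv⟩)
  · obtain ⟨g, h, rfl⟩ := hq
    refine Or.inr (Or.inr ⟨u, x ++ g, x' ++ g, h ++ y, h ++ y', hu, by simp [h₁],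
      by simp [h₂], fun hg => hxx ?_⟩)
    have hx : x.length = x'.length := by simpa using congrArg List.length hg
    exact (List.append_inj (by simpa using h₁.symm.trans h₂) hx).1

lemma IsPiece.of_overlap {U W p q s t : List A} (hU : U ∈ RelWords R) (hW : W ∈ RelWords R)
    (hUq : U = p ++ q ++ s) (hWq : W = q ++ t) (hne : U ≠ W ∨ 0 < p.length) :
    IsPiece R q := by
  by_cases hUW : U = W
  · have hp : p ≠ [] := List.ne_nil_of_length_pos (hne.resolve_left (not_not.2 hUW))
    exact Or.inr (Or.inr ⟨U, p, [], s, t, hU, hUq, by simpa [hUW], hp⟩)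
  · exact Or.inr (Or.inl ⟨U, W, hU, hW, hUW, ⟨p, s, hUq.symm⟩, ⟨[], t, hWq.symm⟩⟩)

lemma not_isPiece_of_mem (hC : SatisfiesC R 4) {u : List A} (hu : u ∈ RelWords R) :
    ¬ IsPiece R u := fun h => by
  simpa using hC u hu [u] (by simpa using h) (by simp)

end Pieces

namespace RelDecomp

variable {R : Set (List A × List A)} {u X Y Z : List A}

lemma mem (h : RelDecomp R u X Y Z) : u ∈ RelWords R := h.1

lemma eq (h : RelDecomp R u X Y Z) : u = X ++ Y ++ Z := h.2.2.2

lemma isPiece_X (h : RelDecomp R u X Y Z) : IsPiece R X := h.2.1.2.1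

lemma isPiece_Z (h : RelDecomp R u X Y Z) : IsPiece R Z := h.2.2.1.2.1

lemma length_le_of_prefix (h : RelDecomp R u X Y Z) {q : List A} (hq : q <+: u)
    (hp : IsPiece R q) : q.length ≤ X.length := h.2.1.2.2 q hq hp

lemma length_le_of_suffix (h : RelDecomp R u X Y Z) {q : List A} (hq : q <:+ u)
    (hp : IsPiece R q) : q.length ≤ Z.length := h.2.2.1.2.2 q hq hp

lemma length_eq (h : RelDecomp R u X Y Z) : u.length = X.length + Y.length + Z.length := by
  simp [h.eq, Nat.add_assoc]

lemma XY_prefix (h : RelDecomp R u X Y Z) : X ++ Y <+: u := ⟨Z, h.eq.symm⟩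

lemma append_XY_prefix (h : RelDecomp R u X Y Z) (x : List A) : x ++ X ++ Y <+: x ++ u := by
  simpa using (List.prefix_append_right_inj x).2 h.XY_prefix

lemma not_isPiece_Y (hC : SatisfiesC R 4) (h : RelDecomp R u X Y Z) : ¬ IsPiece R Y :=
  fun hY => by
    have := hC u h.mem [X, Y, Z] (by simp [h.isPiece_X, hY, h.isPiece_Z]) (by simp [h.eq])
    simp at this

lemma Y_length_pos (hC : SatisfiesC R 4) (h : RelDecomp R u X Y Z) : 0 < Y.length :=
  List.length_pos_iff.2 fun hY => h.not_isPiece_Y hC (hY ▸ Or.inl rfl)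

lemma unique {X' Y' Z' : List A} (h : RelDecomp R u X Y Z) (h' : RelDecomp R u X' Y' Z') :
    X = X' ∧ Y = Y' := by
  have hX : X.length = X'.length := le_antisymm
    (h'.length_le_of_prefix h.2.1.1 h.isPiece_X) (h.length_le_of_prefix h'.2.1.1 h'.isPiece_X)
  have hZ : Z.length = Z'.length := le_antisymm
    (h'.length_le_of_suffix h.2.2.1.1 h.isPiece_Z) (h.length_le_of_suffix h'.2.2.1.1 h'.isPiece_Z)
  obtain rfl := (List.prefix_of_prefix_length_le h.2.1.1 h'.2.1.1 hX.le).eq_of_length hX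
  obtain rfl := (List.suffix_of_suffix_length_le h.2.2.1.1 h'.2.2.1.1 hZ.le).eq_of_length hZ
  have hu := h.eq.symm.trans h'.eq
  simp only [List.append_assoc, List.append_cancel_left_eq] at hu
  exact ⟨rfl, List.append_cancel_right hu⟩

end RelDecomp

section Decomposition

variable {R : Set (List A × List A)}

lemma exists_maxPiecePrefix (u : List A) : ∃ X, MaxPiecePrefix R u X := by
  classical
  set n := Nat.findGreatest (fun k => IsPiece R (u.take k)) u.length
  have hn : n ≤ u.length := Nat.findGreatest_le _
  refine ⟨u.take n, List.take_prefix _ _,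
    Nat.findGreatest_spec (P := fun k => IsPiece R (u.take k)) (Nat.zero_le _)
      (Or.inl List.take_zero),
    fun q hq hpq => ?_⟩
  rw [List.length_take_of_le hn]
  exact Nat.le_findGreatest hq.length_le (by rwa [← List.prefix_iff_eq_take.1 hq])

lemma exists_maxPieceSuffix (u : List A) : ∃ Z, MaxPieceSuffix R u Z := by
  classical
  set n := Nat.findGreatest (fun k => IsPiece R (u.drop (u.length - k))) u.length
  have hn : n ≤ u.length := Nat.findGreatest_le _
  refine ⟨u.drop (u.length - n), List.drop_suffix _ _,
    Nat.findGreatest_spec (P := fun k => IsPiece R (u.drop (u.length - k))) (Nat.zero_le _)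
      (Or.inl (by simp)), fun q hq hpq => ?_⟩
  rw [List.length_drop]
  have := Nat.le_findGreatest (P := fun k => IsPiece R (u.drop (u.length - k))) hq.length_le
    (by rwa [← List.suffix_iff_eq_drop.1 hq])
  omega

lemma exists_relDecomp (hC : SatisfiesC R 4) {u : List A} (hu : u ∈ RelWords R) :
    ∃ X Y Z, RelDecomp R u X Y Z := by
  obtain ⟨X, hX⟩ := exists_maxPiecePrefix (R := R) u
  obtain ⟨Z, hZ⟩ := exists_maxPieceSuffix (R := R) u
  obtain ⟨s, hs⟩ := hX.1
  have hZs : Z <:+ s := by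
    refine List.suffix_of_suffix_length_le hZ.1 ⟨X, hs⟩ (not_lt.1 fun hlt => ?_)
    have hsp : IsPiece R s :=
      hZ.2.1.infix (List.suffix_of_suffix_length_le ⟨X, hs⟩ hZ.1 hlt.le).isInfix
    have := hC u hu [X, s] (by simp [hX.2.1, hsp]) (by simp [hs])
    simp at this
  obtain ⟨Y, rfl⟩ := hZs
  exact ⟨X, Y, Z, hu, hX, hZ, by simp [← hs]⟩

end Decomposition

section Overlaps

variable {R : Set (List A × List A)}

/-- The overlap of `f` with `t` is a piece and a prefix of `W`, so it ends within `Xw`. -/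
lemma end_le_of_overlap {v x₁ f U x₂ t W Xw Yw Zw : List A} (hU : U ∈ RelWords R)
    (hf : f <+: U) (h₁ : x₁ ++ f <+: v) (hW : RelDecomp R W Xw Yw Zw) (ht : t <+: W)
    (hlong : Xw.length < t.length) (h₂ : x₂ ++ t <+: v) (hle : x₁.length ≤ x₂.length)
    (hov : x₂.length ≤ x₁.length + f.length) (hne : U ≠ W ∨ x₁.length < x₂.length) :
    x₁.length + f.length ≤ x₂.length + Xw.length := by
  obtain ⟨s, rfl⟩ := hf
  obtain ⟨t', rfl⟩ := ht
  rcases le_or_gt (x₁.length + f.length) (x₂.length + t.length) with hend | hend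
  · obtain ⟨p, q, rfl, hp, q', rfl⟩ := exists_split_of_overlap h₁ h₂ hle hov hend
    have hq : IsPiece R q :=
      IsPiece.of_overlap hU hW.mem rfl (List.append_assoc _ _ _) (hne.imp_right (by omega))
    have := hW.length_le_of_prefix ⟨q' ++ t', by simp⟩ hq
    simp only [List.length_append] at this hp ⊢
    omega
  · obtain ⟨p, r, rfl, hp⟩ := exists_split_of_contains h₁ h₂ hle hend.le
    have ht : IsPiece R t :=
      IsPiece.of_overlap hU hW.mem (p := p) (s := r ++ s) (by simp) rfl (hne.imp_right (by omega))
    have := hW.length_le_of_prefix ⟨t', rfl⟩ ht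
    omega

/-- The overlap would be a piece containing `Yu`. -/
lemma false_of_start_le_X (hC : SatisfiesC R 4) {v x₁ U Xu Yu Zu x₂ α : List A}
    (hU : RelDecomp R U Xu Yu Zu) (h₁ : x₁ ++ (Xu ++ Yu) <+: v) (hα : α ∈ RelWords R)
    (h₂ : x₂ ++ α <+: v) (hle : x₁.length ≤ x₂.length)
    (hX : x₂.length ≤ x₁.length + Xu.length) (hne : U ≠ α ∨ x₁.length < x₂.length) : False := by
  have hUeq := hU.eq
  rcases le_or_gt (x₁.length + (Xu ++ Yu).length) (x₂.length + α.length) with hend | hend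
  · obtain ⟨p, q, hpq, hp, q', rfl⟩ :=
      exists_split_of_overlap h₁ h₂ hle (by simp; omega) hend
    have hq : IsPiece R q :=
      IsPiece.of_overlap hU.mem hα (by rw [hUeq, hpq]) rfl (hne.imp_right (by omega))
    have hYq : Yu <:+ q := by
      rcases List.append_eq_append_iff.1 hpq.symm with ⟨c, rfl, rfl⟩ | ⟨c, rfl, rfl⟩
      · exact List.suffix_append _ _
      · simp only [List.length_append] at hp hX
        obtain rfl : c = [] := List.eq_nil_of_length_eq_zero (by omega)
        simp
    exact hU.not_isPiece_Y hC (hq.infix hYq.isInfix)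
  · obtain ⟨p, r, hpr, hp⟩ := exists_split_of_contains h₁ h₂ hle hend.le
    exact not_isPiece_of_mem hC hα
      (IsPiece.of_overlap hU.mem hα (p := p) (s := r ++ Zu) (t := []) (by simp [hUeq, hpr])
        (by simp) (hne.imp_right (by omega)))

/-- The overlap would be a piece suffix of `α` longer than `Za`. -/
lemma false_of_start_lt_XY {v x₁ α Xa Ya Za x₂ t W Xw Yw Zw : List A}
    (hα : RelDecomp R α Xa Ya Za) (h₁ : x₁ ++ α <+: v) (hW : RelDecomp R W Xw Yw Zw)
    (ht : t <+: W) (hlong : Xw.length < t.length) (h₂ : x₂ ++ t <+: v)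
    (hle : x₁.length ≤ x₂.length) (hlt : x₂.length < x₁.length + Xa.length + Ya.length)
    (hne : α ≠ W ∨ x₁.length < x₂.length) : False := by
  have hαlen := hα.length_eq
  obtain ⟨t', rfl⟩ := ht
  rcases le_or_gt (x₁.length + α.length) (x₂.length + t.length) with hend | hend
  · obtain ⟨p, q, hpq, hp, q', rfl⟩ := exists_split_of_overlap h₁ h₂ hle (by omega) hend
    have hq : IsPiece R q :=
      IsPiece.of_overlap hα.mem hW.mem (p := p) (s := []) (by simp [hpq])
        (List.append_assoc _ _ _) (hne.imp_right (by omega))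
    have := hα.length_le_of_suffix ⟨p, hpq.symm⟩ hq
    have := congrArg List.length hpq
    simp only [List.length_append] at this hlong hend
    omega
  · obtain ⟨p, r, hpr, hp⟩ := exists_split_of_contains h₁ h₂ hle hend.le
    have := hW.length_le_of_prefix ⟨t', rfl⟩
      (IsPiece.of_overlap hα.mem hW.mem hpr rfl (hne.imp_right (by omega)))
    omega

lemma eq_of_prefixes_at_same_position {v x U Xu Yu Zu s W Xw Yw Zw t : List A}
    (hU : RelDecomp R U Xu Yu Zu) (hs : s <+: U) (hls : Xu.length < s.length)
    (h₁ : x ++ s <+: v) (hW : RelDecomp R W Xw Yw Zw) (ht : t <+: W)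
    (hlt : Xw.length < t.length) (h₂ : x ++ t <+: v) : U = W := by
  by_contra hUW
  have := end_le_of_overlap hU.mem hs h₁ hW ht hlt h₂ le_rfl (by omega) (Or.inl hUW)
  have := end_le_of_overlap hW.mem ht h₂ hU hs hls h₁ le_rfl (by omega) (Or.inl (Ne.symm hUW))
  omega

end Overlaps

/-- A factor `XᵢYᵢ'` of an overlap prefix, together with the relation word it is cut from. -/
structure Block (R : Set (List A × List A)) where
  word : List A
  X : List A
  Y : List A
  Z : List A
  cut : List A
  decomp : RelDecomp R word X Y Z
  cut_prefix : cut <+: Y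
  cut_ne : cut ≠ Y
  cut_ne_nil : cut ≠ []

namespace Block

variable {R : Set (List A × List A)} (B : Block R)

def body : List A := B.X ++ B.cut

lemma body_prefix : B.body <+: B.word := by
  obtain ⟨t, ht⟩ := B.cut_prefix
  exact ⟨t ++ B.Z, by simp [body, B.decomp.eq, ← ht]⟩

lemma X_length_lt : B.X.length < B.body.length := by
  simpa [body] using List.length_pos_iff.2 B.cut_ne_nil

lemma body_length_lt : B.body.length < B.X.length + B.Y.length := by
  have := B.cut_prefix.length_le
  have := mt B.cut_prefix.eq_of_length B.cut_ne
  simp only [body, List.length_append]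
  omega

end Block

section Blocks

variable {R : Set (List A × List A)}

def bodies (L : List (Block R)) : List A := (L.map Block.body).flatten

@[simp] lemma bodies_nil : bodies ([] : List (Block R)) = [] := rfl

@[simp] lemma bodies_cons (B : Block R) (L : List (Block R)) :
    bodies (B :: L) = B.body ++ bodies L := rfl

@[simp] lemma bodies_append (L L' : List (Block R)) :
    bodies (L ++ L') = bodies L ++ bodies L' := by
  simp [bodies]

lemma OChain.relXY {r X Y : List A} (h : OChain R r X Y) : RelXY R X Y := by
  induction h with
  | base _ _ h => exact h
  | step _ _ _ _ _ _ _ _ _ _ _ ih => exact ih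

lemma OChain.exists_bodies {r X Y : List A} (h : OChain R r X Y) :
    ∃ L : List (Block R), bodies L = r := by
  induction h with
  | base => exact ⟨[], rfl⟩
  | step X Y Y' _ _ _ hXY hY' hne hnil _ ih =>
    obtain ⟨u, Z, hu⟩ := hXY
    obtain ⟨L, rfl⟩ := ih
    exact ⟨⟨u, X, Y, Z, Y', hu, hY', hne, hnil⟩ :: L, by simp [Block.body]⟩

lemma exists_long_prefix_after {v g t W Xw Yw Zw : List A} (hW : RelDecomp R W Xw Yw Zw)
    (ht : t <+: W) (hlong : Xw.length < t.length) (L : List (Block R))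
    (h : g ++ bodies L ++ t <+: v) :
    ∃ W' X' Y' Z' t' : List A, RelDecomp R W' X' Y' Z' ∧ t' <+: W' ∧ X'.length < t'.length ∧
      g ++ t' <+: v := by
  cases L with
  | nil => exact ⟨W, Xw, Yw, Zw, t, hW, ht, hlong, by simpa using h⟩
  | cons B L =>
    exact ⟨B.word, B.X, B.Y, B.Z, B.body, B.decomp, B.body_prefix, B.X_length_lt,
      (List.prefix_append _ _).trans (by simpa [List.append_assoc] using h)⟩

/-- The relation word `α` would overlap the next block (or `t`) from inside its own `Xa Ya`. -/
lemma false_of_start_in_bodies (hC : SatisfiesC R 4) {v t W Xw Yw Zw : List A}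
    (hW : RelDecomp R W Xw Yw Zw) (ht : t <+: W) (hlong : Xw.length < t.length)
    {x α Xa Ya Za : List A} (hα : RelDecomp R α Xa Ya Za) (hxα : x ++ α <+: v) :
    ∀ (L : List (Block R)) (g : List A), g ++ bodies L ++ t <+: v → g.length ≤ x.length →
      x.length < g.length + (bodies L).length → False := by
  have hYa := hα.Y_length_pos hC
  intro L
  induction L with
  | nil => intro g _ h₁ h₂; simp at h₂; omega
  | cons B L ih =>
    intro g h h₁ h₂
    have hB : g ++ B.body <+: v := (List.prefix_append _ _).trans (by simpa using h)
    have h' : g ++ B.body ++ bodies L ++ t <+: v := by simpa using h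
    by_cases hin : x.length < g.length + B.body.length
    · obtain ⟨W', X', Y', Z', t', hW', ht', hlong', hnext⟩ :=
        exists_long_prefix_after hW ht hlong L h'
      have hreach : g.length + B.body.length < x.length + Xa.length + Ya.length := by
        by_cases hsame : α = B.word ∧ x.length = g.length
        · obtain ⟨rfl, rfl⟩ := hα.unique (hsame.1 ▸ B.decomp)
          have := B.body_length_lt
          omega
        · have := end_le_of_overlap B.decomp.mem B.body_prefix hB hα (List.prefix_refl α)
            (by rw [hα.length_eq]; omega) hxα h₁ (by omega)
            (by by_contra! hne; exact hsame ⟨hne.1.symm, by omega⟩)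
          omega
      exact false_of_start_lt_XY hα hxα hW' ht' hlong' hnext (by simp; omega) (by simp; omega)
        (Or.inr (by simp; omega))
    · simp only [bodies_cons, List.length_append] at h₂
      exact ih (g ++ B.body) h' (by simp; omega) (by simp; omega)

end Blocks

section Rewriting

variable {R : Set (List A × List A)}

def NoXYFactorBefore (R : Set (List A × List A)) (v : List A) (n : ℕ) : Prop :=
  ∀ c X₀ Y₀ : List A, RelXY R X₀ Y₀ → c ++ X₀ ++ Y₀ <+: v → n ≤ c.length

lemma exists_block_of_lt_of_lt {v c x U X₀ Y₀ Z₀ : List A} (hU : RelDecomp R U X₀ Y₀ Z₀)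
    (hocc : c ++ X₀ ++ Y₀ <+: v) (hx : x <+: v) (h₁ : c.length + X₀.length < x.length)
    (h₂ : x.length < c.length + X₀.length + Y₀.length) :
    ∃ B : Block R, B.word = U ∧ c ++ B.body = x := by
  set k := x.length - (c.length + X₀.length)
  have hk : (Y₀.take k).length = k := List.length_take_of_le (by omega)
  refine ⟨⟨U, X₀, Y₀, Z₀, Y₀.take k, hU, List.take_prefix _ _, fun h => ?_, fun h => ?_⟩,
    rfl, ?_⟩
  · rw [h] at hk; omega
  · rw [h] at hk; simp at hk; omega
  · have hpre : c ++ (X₀ ++ Y₀.take k) <+: v :=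
      (List.prefix_append_right_inj _).2 ((List.prefix_append_right_inj _).2
        (List.take_prefix _ _)) |>.trans (by simpa using hocc)
    exact (List.prefix_of_prefix_length_le hpre hx (by simp [hk]; omega)).eq_of_length
      (by simp [hk]; omega)

variable {v v' x β Xb Yb Zb : List A} {n : ℕ}

/-- By minimality the factor does not lie inside `x`; by `end_le_of_overlap` it ends within
`Xb`, and `Y₀`, not being a piece, does not fit inside `Xb`. -/
lemma lt_and_lt_of_factor_before (hC : SatisfiesC R 4) (hxv : x <+: v)
    (hmin : NoXYFactorBefore R v n) (hn : n ≤ x.length) (hxβ : x ++ β <+: v')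
    (hβ : RelDecomp R β Xb Yb Zb) {c U X₀ Y₀ Z₀ : List A} (hU : RelDecomp R U X₀ Y₀ Z₀)
    (hocc : c ++ X₀ ++ Y₀ <+: v') (hc : c.length < n) :
    c.length + X₀.length < x.length ∧ x.length < c.length + X₀.length + Y₀.length := by
  have hx : x <+: v' := (List.prefix_append _ _).trans hxβ
  have hend : x.length < c.length + X₀.length + Y₀.length := by
    by_contra! hle
    have := hmin c X₀ Y₀ ⟨U, Z₀, hU⟩
      ((List.prefix_of_prefix_length_le hocc hx (by simp; omega)).trans hxv)
    omega
  refine ⟨not_le.1 fun hle => ?_, hend⟩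
  have hocc' : c ++ (X₀ ++ Y₀) <+: v' := by simpa using hocc
  have hXb := end_le_of_overlap hU.mem hU.XY_prefix hocc' hβ (List.prefix_refl β)
    (by rw [hβ.length_eq]; have := hβ.Y_length_pos hC; omega) hxβ (by omega)
    (by simp; omega) (Or.inr (by omega))
  have hXbv : x ++ Xb <+: v' := (List.prefix_append_right_inj _).2
    ((List.prefix_append _ _).trans hβ.XY_prefix) |>.trans hxβ
  obtain ⟨p, r, hpr, -⟩ := exists_split_of_contains hXbv hocc (by simpa using hle)
    (by simp at hXb ⊢; omega)
  exact hU.not_isPiece_Y hC (hβ.isPiece_X.infix ⟨p, r, hpr.symm⟩)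

lemma false_of_prefix_inside_factor {v c U X₀ Y₀ Z₀ g t W Xw Yw Zw : List A}
    (hU : RelDecomp R U X₀ Y₀ Z₀) (hocc : c ++ X₀ ++ Y₀ <+: v) (hW : RelDecomp R W Xw Yw Zw)
    (ht : t <+: W) (hlong : Xw.length < t.length) (hg : g ++ t <+: v)
    (hcg : c.length < g.length) (hend : g.length + t.length ≤ c.length + X₀.length + Y₀.length) :
    False := by
  have := end_le_of_overlap hU.mem hU.XY_prefix (by simpa using hocc) hW ht hlong hg hcg.le
    (by simp; omega) (Or.inr hcg)
  simp at this
  omega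

/-- A new factor `X₀Y₀` starting inside `b` can only straddle `x`, with `b = x`; then `b` gives
up the block of that factor which ends at `x`. -/
lemma exists_noXYFactorBefore_of_rewrite (hC : SatisfiesC R 4) (hxv : x <+: v)
    (hxβ : x ++ β <+: v') (hβ : RelDecomp R β Xb Yb Zb) {b : List A}
    (hmin : NoXYFactorBefore R v b.length) {L : List (Block R)} {W X Y Z : List A}
    (hW : RelDecomp R W X Y Z) (hpre : b ++ bodies L ++ X ++ Y <+: v')
    (hgeom : (b ++ bodies L ++ X ++ Y).length ≤ x.length ∨ (b ++ bodies L).length = x.length) :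
    ∃ (b₁ : List A) (F : List (Block R)), b₁ ++ bodies F = b ∧
      NoXYFactorBefore R v' b₁.length := by
  by_cases hok : NoXYFactorBefore R v' b.length
  · exact ⟨b, [], by simp, hok⟩
  simp only [NoXYFactorBefore, not_forall, not_le] at hok
  obtain ⟨c, X₀, Y₀, ⟨U, Z₀, hU⟩, hocc, hc⟩ := hok
  have hx : x <+: v' := (List.prefix_append _ _).trans hxβ
  have hbx : b.length ≤ x.length := by rcases hgeom with h | h <;> simp at h <;> omega
  obtain ⟨h₁, h₂⟩ := lt_and_lt_of_factor_before hC hxv hmin hbx hxβ hβ hU hocc hc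
  obtain rfl : L = [] := by
    rcases L with _ | ⟨B, L⟩
    · rfl
    refine (false_of_prefix_inside_factor hU hocc B.decomp B.body_prefix B.X_length_lt
      ((List.prefix_append _ _).trans (by simpa using hpre)) hc ?_).elim
    rcases hgeom with h | h <;> simp at h <;> omega
  have hb : b = x := by
    rcases hgeom with h | h
    · refine (false_of_prefix_inside_factor hU hocc hW hW.XY_prefix ?_ (by simpa using hpre) hc
        (by simp at h ⊢; omega)).elim
      have := hW.Y_length_pos hC
      simp; omega
    · have hbv : b <+: v' := (List.prefix_append _ _).trans (by simpa using hpre)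
      simp at h
      exact (List.prefix_of_prefix_length_le hbv hx h.le).eq_of_length h
  obtain ⟨B, rfl, hB⟩ := exists_block_of_lt_of_lt hU hocc hx h₁ h₂
  refine ⟨c, [B], by simp [hb, hB], fun c' X₁ Y₁ ⟨U₁, Z₁, hU₁⟩ hocc₁ => not_lt.1 fun hc' => ?_⟩
  obtain ⟨-, h₂'⟩ := lt_and_lt_of_factor_before hC hxv hmin hbx hxβ hβ hU₁ hocc₁ (by omega)
  have hBlen : c.length + B.body.length = x.length := by simp [← hB]
  exact false_of_prefix_inside_factor hU₁ hocc₁ B.decomp B.body_prefix B.X_length_lt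
    (hB ▸ hx) hc' (by omega)

end Rewriting

section Congruence

variable {R : Set (List A × List A)}

lemma OneStep.symm {u v : List A} (h : OneStep R u v) : OneStep R v u := by
  obtain ⟨x, y, p, q, hpq, rfl, rfl⟩ := h
  exact ⟨x, y, q, p, hpq.symm, rfl, rfl⟩

lemma OneStep.append_append {u v : List A} (h : OneStep R u v) (x y : List A) :
    OneStep R (x ++ u ++ y) (x ++ v ++ y) := by
  obtain ⟨x', y', p, q, hpq, rfl, rfl⟩ := h
  exact ⟨x ++ x', y' ++ y, p, q, hpq, by simp, by simp⟩

lemma reflTransGen_oneStep_of_cong {u v : List A} (h : Cong R u v) :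
    Relation.ReflTransGen (OneStep R) u v := by
  refine h _ ⟨⟨fun _ => .refl, fun h => ?_, .trans⟩, fun u v x y h => ?_⟩ fun p hp =>
    .single ⟨[], [], p.1, p.2, Or.inl hp, by simp, by simp⟩
  · exact Relation.ReflTransGen.mono (fun _ _ => OneStep.symm) _ _ (Relation.reflTransGen_swap.2 h)
  · exact h.lift (fun w => x ++ w ++ y) fun _ _ hs => hs.append_append x y

end Congruence

section Tracking

variable {R : Set (List A × List A)}

def headWord : List (Block R) → List A → List A
  | [], W => W
  | B :: _, _ => B.word

lemma headWord_append_singleton (L : List (Block R)) (B : Block R) (W : List A) :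
    headWord (L ++ [B]) W = headWord L B.word := by
  cases L <;> rfl

/-- `Tracks R u₀ a v`: `a = b B'₁ ⋯ B'ⱼ` and `v` has a prefix `a B₁ ⋯ Bₖ X Y`, where the `B`s
are blocks, `W = XYZ` is a decomposed relation word, the first relation word among
`B₁, …, Bₖ, W` is a complement of `u₀`, and no factor `X₀Y₀` of `v` starts inside `b`. -/
inductive Tracks (R : Set (List A × List A)) (u₀ a v : List A) : Prop
  | intro (b : List A) (pre post : List (Block R)) (W X Y Z : List A) :
      RelDecomp R W X Y Z → a = b ++ bodies pre → a ++ bodies post ++ X ++ Y <+: v →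
      ComplRel R u₀ (headWord post W) → NoXYFactorBefore R v b.length → Tracks R u₀ a v

variable {u₀ a v v' : List A}

lemma Tracks.of_rewrite (hC : SatisfiesC R 4) {x β Xb Yb Zb b : List A}
    {pre post : List (Block R)} {W X Y Z : List A} (hxv : x <+: v) (hxβ : x ++ β <+: v')
    (hβ : RelDecomp R β Xb Yb Zb) (hmin : NoXYFactorBefore R v b.length)
    (ha : a = b ++ bodies pre) (hW : RelDecomp R W X Y Z)
    (hpre : a ++ bodies post ++ X ++ Y <+: v') (hcompl : ComplRel R u₀ (headWord post W))
    (hgeom : (a ++ bodies post ++ X ++ Y).length ≤ x.length ∨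
      (a ++ bodies post).length = x.length) :
    Tracks R u₀ a v' := by
  subst ha
  obtain ⟨b₁, F, rfl, hmin'⟩ := exists_noXYFactorBefore_of_rewrite hC hxv hxβ hβ hmin hW
    (L := pre ++ post) (by simpa using hpre) (by simpa using hgeom)
  exact ⟨b₁, F ++ pre, post, W, X, Y, Z, hW, by simp, hpre, hcompl, hmin'⟩

lemma Tracks.of_oneStep (hC : SatisfiesC R 4) (h : Tracks R u₀ a v) (hs : OneStep R v v') :
    Tracks R u₀ a v' := by
  obtain ⟨x, y, α, β, hαβ, rfl, rfl⟩ := hs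
  obtain ⟨b, pre, post, W, X, Y, Z, hW, ha, hpre, hcompl, hmin⟩ := h
  have hαmem : α ∈ RelWords R := ⟨β, hαβ⟩
  obtain ⟨Xa, Ya, Za, hα⟩ := exists_relDecomp hC hαmem
  obtain ⟨Xb, Yb, Zb, hβ⟩ := exists_relDecomp hC ⟨α, hαβ.symm⟩
  have hxα : x ++ α <+: x ++ α ++ y := List.prefix_append _ _
  have hxv : x <+: x ++ α ++ y := (List.prefix_append _ _).trans hxα
  have hxβ : x ++ β <+: x ++ β ++ y := List.prefix_append _ _
  have hYa := hα.Y_length_pos hC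
  have hαlen := hα.length_eq
  have hY := hW.Y_length_pos hC
  have hbx : b.length ≤ x.length :=
    hmin x Xa Ya ⟨α, Za, hα⟩ ((hα.append_XY_prefix x).trans hxα)
  have hex : (a ++ bodies post).length ≤ x.length := not_lt.1 fun hlt =>
    false_of_start_in_bodies hC hW hW.XY_prefix (by simp; omega) hα hxα (pre ++ post) b
      (by simpa [ha] using hpre) hbx (by simp [ha] at hlt ⊢; omega)
  rcases le_or_gt (a ++ bodies post ++ X ++ Y).length x.length with hbeyond | hinside
  · refine Tracks.of_rewrite hC hxv hxβ hβ hmin ha hW ?_ hcompl (Or.inl hbeyond)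
    exact (List.prefix_of_prefix_length_le hpre hxv hbeyond).trans
      ((List.prefix_append _ _).trans hxβ)
  rcases hex.eq_or_lt with hat | hafter
  · obtain rfl : a ++ bodies post = x :=
      (List.prefix_of_prefix_length_le ((List.prefix_append _ _).trans (by simpa using hpre))
        hxv hat.le).eq_of_length hat
    obtain rfl : α = W := eq_of_prefixes_at_same_position hα (List.prefix_refl α) (by omega)
      hxα hW hW.XY_prefix (by simp; omega) (by simpa using hpre)
    refine Tracks.of_rewrite hC hxv hxβ hβ hmin ha hβ ?_ ?_ (Or.inr rfl)
    · exact (hβ.append_XY_prefix _).trans hxβ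
    · cases post with
      | nil => exact hcompl.tail hαβ
      | cons => exact hcompl
  · have hpre' : a ++ bodies post ++ (X ++ Y) <+: x ++ α ++ y := by simpa using hpre
    have hpastX : (a ++ bodies post).length + X.length < x.length := by
      by_contra! hle
      exact false_of_start_le_X hC hW hpre' hαmem hxα hafter.le hle (Or.inr hafter)
    obtain ⟨B, rfl, hB⟩ := exists_block_of_lt_of_lt hW hpre hxv hpastX
      (by simp at hinside ⊢; omega)
    refine Tracks.of_rewrite hC hxv hxβ hβ hmin ha (post := post ++ [B]) hβ ?_
      (by rwa [headWord_append_singleton]) (Or.inr (by simp [← hB]))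
    simp only [bodies_append, bodies_cons, bodies_nil, List.append_nil, ← List.append_assoc, hB]
    exact (hβ.append_XY_prefix x).trans hxβ


lemma Tracks.of_cong (hC : SatisfiesC R 4) (h : Tracks R u₀ a v) (hvv' : Cong R v v') :
    Tracks R u₀ a v' := by
  have hs := reflTransGen_oneStep_of_cong hvv'
  clear hvv'
  induction hs with
  | refl => exact h
  | tail _ hs ih => exact ih.of_oneStep hC hs

lemma IsOverlapPrefix.tracks {w b r X Y u Z : List A} (h : IsOverlapPrefix R w b r X Y)
    (hu : RelDecomp R u X Y Z) : Tracks R u (b ++ r) w := by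
  obtain ⟨hchain, hpre, hmin⟩ := h
  obtain ⟨L, rfl⟩ := hchain.exists_bodies
  exact ⟨b, L, [], u, X, Y, Z, hu, rfl, by simpa using hpre, .refl,
    fun c X₀ Y₀ hXY hocc => not_lt.1 fun hc => hmin ⟨c, X₀, Y₀, hXY, hc, hocc⟩⟩

lemma Tracks.exists_complement (hC : SatisfiesC R 4) (h : Tracks R u₀ a v) :
    ∃ W X Y Z δ : List A, RelDecomp R W X Y Z ∧ ComplRel R u₀ W ∧ δ <+: Y ∧ δ ≠ [] ∧
      a ++ X ++ δ <+: v := by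
  obtain ⟨b, pre, post, W, X, Y, Z, hW, -, hpre, hcompl, -⟩ := h
  cases post with
  | nil =>
    exact ⟨W, X, Y, Z, Y, hW, hcompl, List.prefix_refl Y,
      List.ne_nil_of_length_pos (hW.Y_length_pos hC), by simpa using hpre⟩
  | cons B L =>
    exact ⟨B.word, B.X, B.Y, B.Z, B.cut, B.decomp, hcompl, B.cut_prefix, B.cut_ne_nil,
      (List.prefix_append _ _).trans (by simpa [Block.body] using hpre)⟩

end Tracking

/-- Otherwise `p` would contain a prefix of `W` longer than its maximal piece prefix `X`. -/
lemma prefix_of_isPiece {R : Set (List A × List A)} {p v a W X Y Z δ : List A}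
    (hW : RelDecomp R W X Y Z) (hδ : δ <+: Y) (hδ₀ : δ ≠ []) (h : a ++ X ++ δ <+: v)
    (hp : IsPiece R p) (hpv : p <+: v) : p <+: a ++ X := by
  refine List.prefix_of_prefix_length_le hpv ((List.prefix_append _ _).trans h)
    (not_lt.1 fun hlt => ?_)
  have hδ₁ : (δ.take 1).length = 1 := List.length_take_of_le (List.length_pos_iff.2 hδ₀)
  have hq : a ++ (X ++ δ.take 1) <+: p := by
    refine List.prefix_of_prefix_length_le (.trans ?_ h) hpv (by simp [hδ₁] at hlt ⊢; omega)
    simpa using (List.prefix_append_right_inj (a ++ X)).2 (List.take_prefix 1 δ)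
  have hXδ : X ++ δ.take 1 <+: W :=
    ((List.prefix_append_right_inj X).2 ((List.take_prefix 1 δ).trans hδ)).trans hW.XY_prefix
  have := hW.length_le_of_prefix hXδ
    (hp.infix ((List.infix_append a _ []).trans (by simpa using hq.isInfix)))
  simp [hδ₁] at this

/-- if `w` has clean overlap prefix `aXY` and a piece `p` is a possible but
not actual prefix of `w`, then `p` is a prefix of `a·X̄` for some complement `X̄Ȳ Z̄` of
`XYZ` with `X̄ ≠ X` or `Ȳ ≠ Y`; in particular `|p| ≤ |a| + |X̄|`. -/
theorem possible_prefix_of_complement (R : Set (List A × List A)) (hC : SatisfiesC R 4)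
    (w a X Y p : List A)
    (hcop : IsCleanOverlapPrefix R w a X Y)
    (hp : IsPiece R p)
    (hpos : ∃ w', Cong R w w' ∧ p <+: w')
    (hnot : ¬ p <+: w) :
    ∃ u Z ub Xb Yb Zb : List A, RelDecomp R u X Y Z ∧ ComplRel R u ub ∧
      RelDecomp R ub Xb Yb Zb ∧ (Xb ≠ X ∨ Yb ≠ Y) ∧
      p <+: (a ++ Xb) ∧ p.length ≤ a.length + Xb.length := by
  obtain ⟨⟨b, r, rfl, hop⟩, -⟩ := hcop
  obtain ⟨u, Z, hu⟩ := hop.1.relXY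
  obtain ⟨w', hww', hpw'⟩ := hpos
  obtain ⟨ub, Xb, Yb, Zb, δ, hub, hcompl, hδ, hδ₀, hpre⟩ :=
    ((hop.tracks hu).of_cong hC hww').exists_complement hC
  have hpa : p <+: b ++ r ++ Xb := prefix_of_isPiece hub hδ hδ₀ hpre hp hpw'
  refine ⟨u, Z, ub, Xb, Yb, Zb, hu, hcompl, hub, Or.inl fun hX => hnot ?_, hpa,
    by simpa [Nat.add_assoc] using hpa.length_le⟩
  exact (hX ▸ hpa).trans ((List.prefix_append _ _).trans hop.2.1)
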